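/- arXiv:math/0506341 — 4 statements merged into one kernel-verified Lean document; each statement's English description precedes it below -/
import Mathlib

section
/- With X, U, φ, φ_i, M_i, Γ as above (X satisfying unique continuation, the φ_i pairwise distinct, Γ of measure zero), the sets M_i are pairwise separated: for all i ≠ j, the closure of M_i is disjoint from M_j. -/
open MeasureTheory

/-- In the canonical piecewise decomposition, the sets `Mᵢ` are
pairwise separated: for `i ≠ j`, the closure of `Mᵢ` is disjoint from `Mⱼ`. -/
theorem stmt1_closure_disjoint
    (U : Set ℂ) (hU : IsOpen U) (hUconn : IsConnected U)
    (X : Set (ℂ → ℝ))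
    (hXsmooth : ∀ f ∈ X, ContDiffOn ℝ (⊤ : ℕ∞) f U)
    (hXsub : ∀ f ∈ X, ∀ g ∈ X, f - g ∈ X)
    (hUCP : ∀ f ∈ X, ∀ V : Set ℂ, IsOpen V → V.Nonempty → V ⊆ U →
      (∀ z ∈ V, f z = 0) → ∀ z ∈ U, f z = 0)
    (r : ℕ) (hr : 0 < r)
    (φ : ℂ → ℝ) (hφ : LocallyIntegrableOn φ U volume)
    (φi : Fin r → ℂ → ℝ) (hφiX : ∀ i, φi i ∈ X)
    (hdist : ∀ i j, i ≠ j → ∃ z ∈ U, φi i z ≠ φi j z)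
    (M : Fin r → Set ℂ)
    (hM : ∀ i, M i = ⋃₀ {V : Set ℂ | IsOpen V ∧ V ⊆ U ∧
      ∀ᵐ z ∂volume, z ∈ V → φ z = φi i z})
    (Γ : Set ℂ) (hΓ : Γ = ⋂ i, (U \ M i))
    (hΓnull : volume Γ = 0) :
    ∀ i j, i ≠ j → closure (M i) ∩ M j = ∅ := by
  intro i j hij
  by_contra h
  obtain ⟨z, hzi, hzj⟩ := Set.nonempty_iff_ne_empty.mpr h
  rw [hM j] at hzj
  obtain ⟨V₂, ⟨hV₂o, hV₂U, hV₂ae⟩, hzV₂⟩ := hzj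
  obtain ⟨w, hwV₂, hwMi⟩ := mem_closure_iff.mp hzi V₂ hV₂o hzV₂
  rw [hM i] at hwMi
  obtain ⟨V₁, ⟨hV₁o, hV₁U, hV₁ae⟩, hwV₁⟩ := hwMi
  set W := V₁ ∩ V₂ with hWdef
  have hWo : IsOpen W := hV₁o.inter hV₂o
  have hWU : W ⊆ U := fun x hx => hV₁U hx.1
  have hWne : W.Nonempty := ⟨w, hwV₁, hwV₂⟩
  set f := φi i - φi j with hfdef
  have hfX : f ∈ X := hXsub _ (hφiX i) _ (hφiX j)
  have hae : ∀ᵐ x ∂(volume : Measure ℂ), x ∈ W → f x = 0 := by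
    filter_upwards [hV₁ae, hV₂ae] with x h1 h2 hx
    simp only [hfdef, Pi.sub_apply]
    rw [← h1 hx.1, ← h2 hx.2, sub_self]
  have hcont : ContinuousOn f U := (hXsmooth _ hfX).continuousOn
  have hfW : ∀ x ∈ W, f x = 0 := by
    intro x hx
    by_contra hfx
    have hcx : ContinuousAt f x := hcont.continuousAt (hU.mem_nhds (hWU hx))
    have hev : ∀ᶠ y in nhds x, f y ≠ 0 ∧ y ∈ W :=
      (hcx.eventually_ne hfx).and (hWo.mem_nhds hx)
    obtain ⟨N, hN, hNo, hxN⟩ := eventually_nhds_iff.mp hev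
    have hnull : volume {y : ℂ | ¬ (y ∈ W → f y = 0)} = 0 := ae_iff.mp hae
    have hN0 : volume N = 0 := by
      refine measure_mono_null (fun y hy => ?_) hnull
      intro h'
      exact (hN y hy).1 (h' (hN y hy).2)
    exact absurd hN0 (hNo.measure_pos volume ⟨x, hxN⟩).ne'
  have hzero := hUCP f hfX W hWo hWne hWU hfW
  obtain ⟨z₀, hz₀U, hne⟩ := hdist i j hij
  have := hzero z₀ hz₀U
  simp only [hfdef, Pi.sub_apply, sub_eq_zero] at this
  exact hne this
end

section
/- With X, U, φ, φ_i, M_i, Γ as above, each M_i equals the interior of its own closure: M_i = int(cl(M_i)) for every i. -/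
open MeasureTheory

/-- Each `Mᵢ` equals the interior of its own closure
(taken within the domain `U`): `Mᵢ = int(cl(Mᵢ)) ∩ U`. -/
theorem stmt2_eq_interior_closure
    (U : Set ℂ) (hU : IsOpen U) (hUconn : IsConnected U)
    (X : Set (ℂ → ℝ))
    (hXsmooth : ∀ f ∈ X, ContDiffOn ℝ (⊤ : ℕ∞) f U)
    (hXsub : ∀ f ∈ X, ∀ g ∈ X, f - g ∈ X)
    (hUCP : ∀ f ∈ X, ∀ V : Set ℂ, IsOpen V → V.Nonempty → V ⊆ U →
      (∀ z ∈ V, f z = 0) → ∀ z ∈ U, f z = 0)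
    (r : ℕ) (hr : 0 < r)
    (φ : ℂ → ℝ) (hφ : LocallyIntegrableOn φ U volume)
    (φi : Fin r → ℂ → ℝ) (hφiX : ∀ i, φi i ∈ X)
    (hdist : ∀ i j, i ≠ j → ∃ z ∈ U, φi i z ≠ φi j z)
    (M : Fin r → Set ℂ)
    (hM : ∀ i, M i = ⋃₀ {V : Set ℂ | IsOpen V ∧ V ⊆ U ∧
      ∀ᵐ z ∂volume, z ∈ V → φ z = φi i z})
    (Γ : Set ℂ) (hΓ : Γ = ⋂ i, (U \ M i))
    (hΓnull : volume Γ = 0) :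
    ∀ i, M i = interior (closure (M i)) ∩ U := by
  have hMopen : ∀ i, IsOpen (M i) := by
    intro i; rw [hM]; exact isOpen_sUnion fun V hV => hV.1
  have hMsub : ∀ i, M i ⊆ U := by
    intro i; rw [hM]; exact Set.sUnion_subset fun V hV => hV.2.1
  have hMae : ∀ i, ∀ᵐ z ∂volume, z ∈ M i → φ z = φi i z := by
    intro i
    obtain ⟨T, hTc, hTsub, hTU⟩ := TopologicalSpace.isOpen_sUnion_countable
      {V : Set ℂ | IsOpen V ∧ V ⊆ U ∧ ∀ᵐ z ∂volume, z ∈ V → φ z = φi i z}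
      (fun V hV => hV.1)
    have hae : ∀ᵐ z ∂volume, ∀ V ∈ T, z ∈ V → φ z = φi i z :=
      (MeasureTheory.ae_ball_iff hTc).2 fun V hV => (hTsub hV).2.2
    filter_upwards [hae] with z hz hzM
    rw [hM i, ← hTU] at hzM
    obtain ⟨V, hVT, hzV⟩ := hzM
    exact hz V hVT hzV
  -- disjointness of int(cl(M i)) with M j for j ≠ i
  have hdisj : ∀ i j, i ≠ j → interior (closure (M i)) ∩ M j = ∅ := by
    intro i j hij
    by_contra h
    obtain ⟨z, hz⟩ := Set.nonempty_iff_ne_empty.2 h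
    set W := interior (closure (M i)) ∩ M j with hWdef
    have hWopen : IsOpen W := isOpen_interior.inter (hMopen j)
    have hzcl : z ∈ closure (M i) := interior_subset hz.1
    obtain ⟨w, hwW, hwMi⟩ := mem_closure_iff.1 hzcl W hWopen hz
    set W' := W ∩ M i with hW'def
    have hW'open : IsOpen W' := hWopen.inter (hMopen i)
    have hW'ne : W'.Nonempty := ⟨w, hwW, hwMi⟩
    have hW'sub : W' ⊆ U := fun x hx => hMsub i hx.2
    have hW'meas : MeasurableSet W' := hW'open.measurableSet
    -- a.e. on W', φi i = φi j
    have hae : φi i =ᵐ[volume.restrict W'] φi j := by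
      rw [Filter.EventuallyEq, ae_restrict_iff' hW'meas]
      filter_upwards [hMae i, hMae j] with x hxi hxj hxW'
      rw [← hxi hxW'.2, ← hxj hxW'.1.2]
    have heq : Set.EqOn (φi i) (φi j) W' :=
      MeasureTheory.Measure.eqOn_of_ae_eq hae
        (((hXsmooth _ (hφiX i)).continuousOn).mono hW'sub)
        (((hXsmooth _ (hφiX j)).continuousOn).mono hW'sub)
        (by rw [hW'open.interior_eq]; exact subset_closure)
    -- unique continuation
    have hzero : ∀ x ∈ U, (φi i - φi j) x = 0 := by
      refine hUCP _ (hXsub _ (hφiX i) _ (hφiX j)) W' hW'open hW'ne hW'sub ?_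
      intro x hx
      simp [heq hx]
    obtain ⟨z₀, hz₀U, hz₀⟩ := hdist i j hij
    have := hzero z₀ hz₀U
    simp only [Pi.sub_apply, sub_eq_zero] at this
    exact hz₀ this
  intro i
  apply Set.Subset.antisymm
  · exact Set.subset_inter (interior_maximal subset_closure (hMopen i)) (hMsub i)
  · -- V := int(cl(M i)) ∩ U is in the defining collection
    set V := interior (closure (M i)) ∩ U with hVdef
    have hVopen : IsOpen V := isOpen_interior.inter hU
    have hVae : ∀ᵐ z ∂volume, z ∈ V → φ z = φi i z := by
      have hΓae : ∀ᵐ z ∂volume, z ∉ Γ :=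
        (measure_eq_zero_iff_ae_notMem).1 hΓnull
      filter_upwards [hΓae, hMae i] with z hzΓ hzi hzV
      have hzU : z ∈ U := hzV.2
      -- z ∉ Γ means z ∈ M j for some j
      have : ∃ j, z ∈ M j := by
        by_contra hc
        push_neg at hc
        exact hzΓ (by rw [hΓ]; exact Set.mem_iInter.2 fun j => ⟨hzU, hc j⟩)
      obtain ⟨j, hzj⟩ := this
      by_cases hji : j = i
      · exact hzi (hji ▸ hzj)
      · exact absurd (hdisj i j (Ne.symm hji) ▸ Set.mem_inter hzV.1 hzj)
          (Set.notMem_empty z)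
    rw [hM i]
    exact Set.subset_sUnion_of_mem ⟨hVopen, Set.inter_subset_right, hVae⟩
end

section
/- With X, U, φ, φ_i, M_i, Γ as above, the exceptional set Γ is exactly the union of pairwise boundary intersections: Γ = ⋃_{1 ≤ i < j ≤ r} (cl(M_i) ∩ cl(M_j)). -/
open MeasureTheory

/-- The exceptional set `Γ` is exactly the union of pairwise
boundary intersections (closures taken within `U`):
`Γ = ⋃_{i<j} (cl(Mᵢ) ∩ cl(Mⱼ)) ∩ U`. -/
theorem stmt3_Gamma_eq_union_closures
    (U : Set ℂ) (hU : IsOpen U) (hUconn : IsConnected U)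
    (X : Set (ℂ → ℝ))
    (hXsmooth : ∀ f ∈ X, ContDiffOn ℝ (⊤ : ℕ∞) f U)
    (hXsub : ∀ f ∈ X, ∀ g ∈ X, f - g ∈ X)
    (hUCP : ∀ f ∈ X, ∀ V : Set ℂ, IsOpen V → V.Nonempty → V ⊆ U →
      (∀ z ∈ V, f z = 0) → ∀ z ∈ U, f z = 0)
    (r : ℕ) (hr : 0 < r)
    (φ : ℂ → ℝ) (hφ : LocallyIntegrableOn φ U volume)
    (φi : Fin r → ℂ → ℝ) (hφiX : ∀ i, φi i ∈ X)
    (hdist : ∀ i j, i ≠ j → ∃ z ∈ U, φi i z ≠ φi j z)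
    (M : Fin r → Set ℂ)
    (hM : ∀ i, M i = ⋃₀ {V : Set ℂ | IsOpen V ∧ V ⊆ U ∧
      ∀ᵐ z ∂volume, z ∈ V → φ z = φi i z})
    (Γ : Set ℂ) (hΓ : Γ = ⋂ i, (U \ M i))
    (hΓnull : volume Γ = 0) :
    Γ = (⋃ i, ⋃ j, ⋃ (_ : i < j), closure (M i) ∩ closure (M j)) ∩ U := by
  -- Basic facts about the maximal sets `M i`.
  have hMopen : ∀ i, IsOpen (M i) := by
    intro i; rw [hM]; exact isOpen_sUnion fun V hV => hV.1
  have hMU : ∀ i, M i ⊆ U := by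
    intro i; rw [hM]
    rintro z ⟨V, hV, hzV⟩
    exact hV.2.1 hzV
  -- `φ = φi i` a.e. on `M i` (via a countable subcover).
  have hMae : ∀ i, ∀ᵐ z ∂(volume : Measure ℂ), z ∈ M i → φ z = φi i z := by
    intro i
    obtain ⟨T, hTc, hTsub, hTeq⟩ :=
      TopologicalSpace.isOpen_sUnion_countable
        {V : Set ℂ | IsOpen V ∧ V ⊆ U ∧ ∀ᵐ z ∂(volume : Measure ℂ), z ∈ V → φ z = φi i z}
        (fun V hV => hV.1)
    have h1 : ∀ᵐ z ∂(volume : Measure ℂ), ∀ V ∈ T, z ∈ V → φ z = φi i z :=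
      (ae_ball_iff hTc).2 (fun V hV => (hTsub hV).2.2)
    filter_upwards [h1] with z hz hzM
    rw [hM i, ← hTeq] at hzM
    obtain ⟨V, hVT, hzV⟩ := hzM
    exact hz V hVT hzV
  -- If two maximal sets intersect, the indices coincide.
  have keyA : ∀ i j : Fin r, (M i ∩ M j).Nonempty → i = j := by
    intro i j hne
    by_contra hij
    set W := M i ∩ M j with hW
    have hWopen : IsOpen W := (hMopen i).inter (hMopen j)
    have hWU : W ⊆ U := Set.inter_subset_left.trans (hMU i)
    have hae : ∀ᵐ z ∂((volume : Measure ℂ).restrict W), φi i z = φi j z := by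
      rw [ae_restrict_iff' hWopen.measurableSet]
      filter_upwards [hMae i, hMae j] with z hz1 hz2 hz
      rw [← hz1 hz.1, hz2 hz.2]
    have heq : Set.EqOn (φi i) (φi j) W :=
      Measure.eqOn_of_ae_eq hae
        ((hXsmooth _ (hφiX i)).continuousOn.mono hWU)
        ((hXsmooth _ (hφiX j)).continuousOn.mono hWU)
        (by rw [hWopen.interior_eq]; exact subset_closure)
    have hfX : φi i - φi j ∈ X := hXsub _ (hφiX i) _ (hφiX j)
    have hzero : ∀ z ∈ U, (φi i - φi j) z = 0 := by
      refine hUCP _ hfX W hWopen hne hWU (fun z hz => ?_)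
      simp [Pi.sub_apply, heq hz]
    obtain ⟨z, hzU, hneq⟩ := hdist i j hij
    have := hzero z hzU
    simp [Pi.sub_apply, sub_eq_zero] at this
    exact hneq this
  -- membership characterisation of Γ
  have hΓmem : ∀ z, z ∈ Γ ↔ z ∈ U ∧ ∀ i, z ∉ M i := by
    intro z
    simp only [hΓ, Set.mem_iInter, Set.mem_diff]
    constructor
    · intro h
      exact ⟨(h ⟨0, hr⟩).1, fun i => (h i).2⟩
    · intro h i
      exact ⟨h.1, h.2 i⟩
  ext z
  simp only [Set.mem_inter_iff, Set.mem_iUnion]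
  constructor
  · -- Γ ⊆ union of pairwise closure intersections
    intro hzΓ
    obtain ⟨hzU, hzM⟩ := (hΓmem z).1 hzΓ
    -- Step 1: z belongs to the closure of some M i
    have step1 : ∃ i, z ∈ closure (M i) := by
      by_contra hc
      push_neg at hc
      have hCclosed : IsClosed (⋃ i, closure (M i)) :=
        isClosed_iUnion_of_finite fun i => isClosed_closure
      set V := U \ ⋃ i, closure (M i) with hV
      have hVopen : IsOpen V := hU.sdiff hCclosed
      have hzV : z ∈ V := ⟨hzU, by simpa using hc⟩
      have hVΓ : V ⊆ Γ := by
        intro w hw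
        refine (hΓmem w).2 ⟨hw.1, fun i hwi => hw.2 ?_⟩
        exact Set.mem_iUnion.2 ⟨i, subset_closure hwi⟩
      have hpos : 0 < volume V := hVopen.measure_pos volume ⟨z, hzV⟩
      have : volume V = 0 := le_antisymm (hΓnull ▸ measure_mono hVΓ) zero_le
      simp [this] at hpos
    obtain ⟨i₀, hi₀⟩ := step1
    -- Step 2: z belongs to the closure of some other M j
    have step2 : ∃ j, j ≠ i₀ ∧ z ∈ closure (M j) := by
      by_contra hc
      push_neg at hc
      have hCclosed : IsClosed (⋃ j, ⋃ (_ : j ≠ i₀), closure (M j)) :=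
        isClosed_iUnion_of_finite fun j =>
          isClosed_iUnion_of_finite fun _ => isClosed_closure
      set V := U \ ⋃ j, ⋃ (_ : j ≠ i₀), closure (M j) with hV
      have hVopen : IsOpen V := hU.sdiff hCclosed
      have hzV : z ∈ V := by
        refine ⟨hzU, ?_⟩
        simp only [Set.mem_iUnion, not_exists]
        intro j hj
        exact hc j hj
      obtain ⟨ε, hε, hball⟩ := Metric.isOpen_iff.1 hVopen z hzV
      -- the ball is a.e. contained in M i₀
      have hsub : Metric.ball z ε \ Γ ⊆ M i₀ := by
        intro w hw
        have hwV : w ∈ V := hball hw.1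
        have hwU : w ∈ U := hwV.1
        have : ∃ j, w ∈ M j := by
          by_contra hno
          push_neg at hno
          exact hw.2 ((hΓmem w).2 ⟨hwU, hno⟩)
        obtain ⟨j, hwj⟩ := this
        rcases eq_or_ne j i₀ with rfl | hji
        · exact hwj
        · exact absurd (Set.mem_iUnion.2 ⟨j, Set.mem_iUnion.2 ⟨hji, subset_closure hwj⟩⟩)
            hwV.2
      have hballae : ∀ᵐ w ∂(volume : Measure ℂ), w ∈ Metric.ball z ε → φ w = φi i₀ w := by
        have hΓae : ∀ᵐ w ∂(volume : Measure ℂ), w ∉ Γ :=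
          (measure_eq_zero_iff_ae_notMem).1 hΓnull
        filter_upwards [hMae i₀, hΓae] with w hw1 hw2 hwB
        exact hw1 (hsub ⟨hwB, hw2⟩)
      have hballM : Metric.ball z ε ⊆ M i₀ := by
        rw [hM i₀]
        intro w hw
        exact ⟨Metric.ball z ε,
          ⟨Metric.isOpen_ball, (Metric.ball_subset_ball le_rfl).trans
            ((hball.trans Set.diff_subset)), hballae⟩, hw⟩
      exact hzM i₀ (hballM (Metric.mem_ball_self hε))
    obtain ⟨j, hji, hj⟩ := step2
    rcases lt_or_gt_of_ne hji with h | h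
    · exact ⟨⟨j, i₀, h, hj, hi₀⟩, hzU⟩
    · exact ⟨⟨i₀, j, h, hi₀, hj⟩, hzU⟩
  · -- reverse inclusion
    rintro ⟨⟨i, j, hij, hzi, hzj⟩, hzU⟩
    refine (hΓmem z).2 ⟨hzU, fun k hk => ?_⟩
    have hik : k = i := by
      apply keyA
      exact mem_closure_iff.1 hzi (M k) (hMopen k) hk
    have hjk : k = j := by
      apply keyA
      exact mem_closure_iff.1 hzj (M k) (hMopen k) hk
    exact absurd (hik ▸ hjk : i = j) (ne_of_lt hij)
end

section
/- With X, U, φ, φ_i, M_i, Γ as above, if in addition φ is continuous on U, then Γ is contained in the zero set of the product g := ∏_{1 ≤ i < j ≤ r} (φ_i − φ_j). -/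
open MeasureTheory

/-- If moreover `φ` is continuous on `U`, then `Γ` is contained
in the zero set of `g := ∏_{i<j} (φᵢ - φⱼ)`. -/
theorem stmt4_Gamma_subset_zero_set
    (U : Set ℂ) (hU : IsOpen U) (hUconn : IsConnected U)
    (X : Set (ℂ → ℝ))
    (hXsmooth : ∀ f ∈ X, ContDiffOn ℝ (⊤ : ℕ∞) f U)
    (hXsub : ∀ f ∈ X, ∀ g ∈ X, f - g ∈ X)
    (hUCP : ∀ f ∈ X, ∀ V : Set ℂ, IsOpen V → V.Nonempty → V ⊆ U →
      (∀ z ∈ V, f z = 0) → ∀ z ∈ U, f z = 0)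
    (r : ℕ) (hr : 0 < r)
    (φ : ℂ → ℝ) (hφ : LocallyIntegrableOn φ U volume)
    (φi : Fin r → ℂ → ℝ) (hφiX : ∀ i, φi i ∈ X)
    (hdist : ∀ i j, i ≠ j → ∃ z ∈ U, φi i z ≠ φi j z)
    (M : Fin r → Set ℂ)
    (hM : ∀ i, M i = ⋃₀ {V : Set ℂ | IsOpen V ∧ V ⊆ U ∧
      ∀ᵐ z ∂volume, z ∈ V → φ z = φi i z})
    (Γ : Set ℂ) (hΓ : Γ = ⋂ i, (U \ M i))
    (hΓnull : volume Γ = 0)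
    (hcont : ContinuousOn φ U) :
    ∀ z ∈ Γ, (∏ p ∈ Finset.univ.filter (fun p : Fin r × Fin r => p.1 < p.2),
      (φi p.1 z - φi p.2 z)) = 0 := by
  -- basic facts about M i
  have hMopen : ∀ i, IsOpen (M i) := by
    intro i; rw [hM i]
    exact isOpen_sUnion (fun V hV => hV.1)
  have hMsub : ∀ i, M i ⊆ U := by
    intro i; rw [hM i]
    exact Set.sUnion_subset (fun V hV => hV.2.1)
  have hφicont : ∀ i, ContinuousOn (φi i) U := fun i =>
    (hXsmooth _ (hφiX i)).continuousOn
  -- φ = φi on M i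
  have hMeq : ∀ i, ∀ w ∈ M i, φ w = φi i w := by
    intro i w hw
    rw [hM i] at hw
    obtain ⟨V, ⟨hVopen, hVU, hVae⟩, hwV⟩ := hw
    by_contra hne
    -- the set where they differ in V is open, nonempty and null
    set D : Set ℂ := V ∩ (fun x => φ x - φi i x) ⁻¹' {0}ᶜ with hD
    have hDopen : IsOpen D :=
      ContinuousOn.isOpen_inter_preimage
        ((hcont.mono hVU).sub ((hφicont i).mono hVU)) hVopen isOpen_compl_singleton
    have hDnull : volume D = 0 := by
      have hae := hVae
      rw [ae_iff] at hae
      refine measure_mono_null (fun x hx => ?_) hae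
      simp only [hD, Set.mem_inter_iff, Set.mem_preimage, Set.mem_compl_iff,
        Set.mem_singleton_iff] at hx
      simp only [Set.mem_setOf_eq, not_forall]
      exact ⟨hx.1, fun h => hx.2 (by simp [h])⟩
    have hDne : D.Nonempty := ⟨w, hwV, by
      simp only [Set.mem_preimage, Set.mem_compl_iff, Set.mem_singleton_iff]
      intro h; exact hne (by linarith [sub_eq_zero.mp h])⟩
    exact absurd hDnull (ne_of_gt (hDopen.measure_pos volume hDne))
  -- φ = φi on closure (M i) ∩ U
  have hMcl : ∀ i, ∀ w ∈ closure (M i), w ∈ U → φ w = φi i w := by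
    intro i w hw hwU
    have hf : ContinuousAt (fun x => φ x - φi i x) w :=
      ((hcont.sub (hφicont i)).continuousAt (hU.mem_nhds hwU))
    have hne : Filter.NeBot (nhdsWithin w (M i)) :=
      mem_closure_iff_nhdsWithin_neBot.mp hw
    have h1 : Filter.Tendsto (fun x => φ x - φi i x) (nhdsWithin w (M i))
        (nhds (φ w - φi i w)) := hf.continuousWithinAt.tendsto
    have h2 : Filter.Tendsto (fun x => φ x - φi i x) (nhdsWithin w (M i))
        (nhds 0) := by
      have heq : (fun x => φ x - φi i x) =ᶠ[nhdsWithin w (M i)] fun _ => (0:ℝ) := by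
        filter_upwards [self_mem_nhdsWithin] with x hx
        rw [hMeq i x hx]; ring
      exact Filter.Tendsto.congr' heq.symm tendsto_const_nhds
    have := tendsto_nhds_unique h1 h2
    linarith
  intro z hz
  have hzU : z ∈ U := by
    rw [hΓ] at hz
    exact (Set.mem_iInter.mp hz ⟨0, hr⟩).1
  have hzM : ∀ i, z ∉ M i := by
    intro i
    rw [hΓ] at hz
    exact (Set.mem_iInter.mp hz i).2
  -- key: z lies in the closure of at least two M i
  have key : ∃ i j : Fin r, i ≠ j ∧ z ∈ closure (M i) ∧ z ∈ closure (M j) := by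
    by_contra hcon
    push_neg at hcon
    by_cases hex : ∃ i, z ∈ closure (M i)
    · obtain ⟨i, hi⟩ := hex
      have honly : ∀ j, j ≠ i → z ∉ closure (M j) := by
        intro j hj hjc
        exact (hcon j i hj hjc) hi
      -- build open neighborhood avoiding all other closures
      set V : Set ℂ := U ∩ ⋂ j : Fin r, (if j = i then Set.univ else (closure (M j))ᶜ)
        with hV
      have hVopen : IsOpen V := by
        refine hU.inter (isOpen_iInter_of_finite fun j => ?_)
        by_cases h : j = i <;> simp [h, isClosed_closure.isOpen_compl]
      have hzV : z ∈ V := by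
        refine ⟨hzU, Set.mem_iInter.mpr fun j => ?_⟩
        by_cases h : j = i
        · simp [h]
        · simp [h, honly j h]
      -- on V \ Γ, φ = φi i
      have hVdiff : ∀ w ∈ V, w ∉ Γ → φ w = φi i w := by
        intro w hwV hwΓ
        rw [hΓ] at hwΓ
        simp only [Set.mem_iInter, not_forall] at hwΓ
        obtain ⟨j, hj⟩ := hwΓ
        have hwU : w ∈ U := hwV.1
        have hwMj : w ∈ M j := by
          by_contra h; exact hj ⟨hwU, h⟩
        have hji : j = i := by
          by_contra h
          have := Set.mem_iInter.mp hwV.2 j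
          simp only [h, if_neg] at this
          exact this (subset_closure hwMj)
        exact hMeq i w (hji ▸ hwMj)
      -- so φ = φi i a.e. on V, hence V ⊆ M i, contradiction
      have hVae : ∀ᵐ x ∂(volume : Measure ℂ), x ∈ V → φ x = φi i x := by
        rw [ae_iff]
        refine measure_mono_null ?_ hΓnull
        intro x hx
        simp only [Set.mem_setOf_eq, not_forall] at hx
        obtain ⟨hxV, hxne⟩ := hx
        by_contra hxΓ
        exact hxne (hVdiff x hxV hxΓ)
      have : V ⊆ M i := by
        rw [hM i]
        exact Set.subset_sUnion_of_mem ⟨hVopen, Set.inter_subset_left, hVae⟩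
      exact hzM i (this hzV)
    · push_neg at hex
      set V : Set ℂ := U ∩ ⋂ j : Fin r, (closure (M j))ᶜ with hV
      have hVopen : IsOpen V :=
        hU.inter (isOpen_iInter_of_finite fun j => isClosed_closure.isOpen_compl)
      have hzV : z ∈ V := ⟨hzU, Set.mem_iInter.mpr fun j => hex j⟩
      have hVΓ : V ⊆ Γ := by
        intro w hwV
        rw [hΓ]
        refine Set.mem_iInter.mpr fun j => ⟨hwV.1, fun hwM => ?_⟩
        exact (Set.mem_iInter.mp hwV.2 j) (subset_closure hwM)
      have : volume V = 0 := measure_mono_null hVΓ hΓnull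
      exact absurd this (ne_of_gt (hVopen.measure_pos volume ⟨z, hzV⟩))
  obtain ⟨i, j, hij, hi, hj⟩ := key
  have heq : φi i z = φi j z := by
    rw [← hMcl i z hi hzU, hMcl j z hj hzU]
  rcases lt_or_gt_of_ne hij with h | h
  · refine Finset.prod_eq_zero (i := (i, j)) ?_ ?_
    · simp [h]
    · simp [heq]
  · refine Finset.prod_eq_zero (i := (j, i)) ?_ ?_
    · simp [h]
    · simp [heq]
end
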